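/- Theorem 3: Any continuous control is not fragile. That is, if a control k is such that for each finite product set X the correspondence (μ, f) ↦ k(X, μ, f) on Δ°(I×X) × (0,1)^{I×X} is nonempty- and compact-valued, upper hemicontinuous, and lower hemicontinuous, then for every game (X, λ_w, p, G, v_q, v_u, ω) and every δ > 0 there exists ε > 0 such that: (1) for every discriminatory equilibrium (c̄*, d*) and every (μ*, f*) with ‖(μ*,f*) − (μ*_RE, f*_RE)‖₂ ≤ ε, every d̂ ∈ 𝒮_k(μ*, f*) is within ℓ²-distance δ of some element of 𝒮_k(μ*_RE, f*_RE); and (2) every k-controlled ε-equilibrium is within ℓ²-distance δ of some k-controlled equilibrium. -/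

import Mathlib

/-!
Formalization of the Coate–Loury statistical discrimination model with
machine-learning (contractible) beliefs, following Zhu,
"The Impact of Equal Opportunity on Statistical Discrimination".
-/

open scoped BigOperators
open MeasureTheory

noncomputable section

attribute [local instance] Classical.propDecidable

/-- Group identities `I = {w, b}`. -/
inductive GrpI
  | w
  | b
deriving DecidableEq

instance : Fintype GrpI := ⟨{GrpI.w, GrpI.b}, fun x => by cases x <;> simp⟩

/-- Classes `Y = {q, u}` (qualified / unqualified). -/
inductive Cls
  | q
  | u
deriving DecidableEq

instance : Fintype Cls := ⟨{Cls.q, Cls.u}, fun x => by cases x <;> simp⟩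

/-- A game `(X, λ_w, p, G, v_q, v_u, ω)` of the Coate–Loury model.  The set of
other features is the finite product `X = X_1 × ⋯ × X_N`, encoded as the pi type
`(j : Fin N) → Xs j`.  The statistical model (Assumption 1) is encoded through a
nonempty subset `Ysub ⊆ {1, …, N}` together with the factorization
`p(x | i, y) = pY(x_𝒴 | y) · pC(x_{-𝒴} | i, x_𝒴)`.  The cost distribution is
given by an everywhere positive density `g` with `∫ g = 1` and `∫ |c| g(c) dc < ∞`. -/
structure Game (N : ℕ) (Xs : Fin N → Type) [∀ j, Fintype (Xs j)]
    [∀ j, Nonempty (Xs j)] where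
  lamw : ℝ
  lamw_pos : 0 < lamw
  lamw_lt_one : lamw < 1
  Ysub : Finset (Fin N)
  Ysub_nonempty : Ysub.Nonempty
  pY : ((j : Ysub) → Xs j.1) → Cls → ℝ
  pC : GrpI → ((j : Fin N) → Xs j) → ℝ
  pY_pos : ∀ xY y, 0 < pY xY y
  pC_pos : ∀ i x, 0 < pC i x
  pY_sum : ∀ y, ∑ xY, pY xY y = 1
  pC_sum : ∀ (i : GrpI) (xY : (j : Ysub) → Xs j.1),
    ∑ x ∈ Finset.univ.filter
        (fun x : (j : Fin N) → Xs j => (fun j : Ysub => x j.1) = xY),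
      pC i x = 1
  g : ℝ → ℝ
  g_pos : ∀ c, 0 < g c
  g_int : Integrable g
  g_norm : (∫ c, g c) = 1
  g_abs_int : Integrable fun c => |c| * g c
  vq : ℝ
  vu : ℝ
  om : ℝ
  vq_pos : 0 < vq
  vu_pos : 0 < vu
  om_pos : 0 < om

section Policies

variable {N : ℕ} {Xs : Fin N → Type}

/-- A decision policy `d : I × X → [0,1]`. -/
def IsPolicy (d : GrpI → ((j : Fin N) → Xs j) → ℝ) : Prop :=
  ∀ i x, d i x ∈ Set.Icc (0 : ℝ) 1

/-- A decision policy when data is color-blind, `d_cb : X → [0,1]`. -/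
def IsCbPolicy (dcb : ((j : Fin N) → Xs j) → ℝ) : Prop :=
  ∀ x, dcb x ∈ Set.Icc (0 : ℝ) 1

/-- `S ⊆ {1, …, N}` has the dependence property for the belief `f`:
`f` depends on `(i, x)` only up to `(i, x_S)`. -/
def DepProp {I : Type} (f : I → ((j : Fin N) → Xs j) → ℝ)
    (S : Finset (Fin N)) : Prop :=
  ∀ (i : I) (x x' : (j : Fin N) → Xs j), (∀ j ∈ S, x j = x' j) → f i x = f i x'

/-- The minimal subset `Ŷ(f)` with the dependence property. -/
def minDep {I : Type} (f : I → ((j : Fin N) → Xs j) → ℝ) : Finset (Fin N) :=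
  Finset.univ.filter fun j => ∀ S : Finset (Fin N), DepProp f S → j ∈ S

variable [∀ j, Fintype (Xs j)]

/-- Full-support probability distributions on `I × X` (the set `Δ°(I × X)`). -/
def FullSupp (μ : GrpI → ((j : Fin N) → Xs j) → ℝ) : Prop :=
  (∀ i x, 0 < μ i x) ∧ ∑ i, ∑ x, μ i x = 1

/-- Beliefs valued in `(0, 1)`. -/
def OpenBelief (f : GrpI → ((j : Fin N) → Xs j) → ℝ) : Prop :=
  ∀ i x, f i x ∈ Set.Ioo (0 : ℝ) 1

/-- Acceptance rate of group `i`. -/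
def AR (i : GrpI) (d μ : GrpI → ((j : Fin N) → Xs j) → ℝ) : ℝ :=
  (∑ x, d i x * μ i x) / ∑ x, μ i x

/-- True positive rate of group `i`. -/
def TP (i : GrpI) (d μ f : GrpI → ((j : Fin N) → Xs j) → ℝ) : ℝ :=
  (∑ x, d i x * μ i x * f i x) / ∑ x, μ i x * f i x

/-- The equal opportunity control `k(X, μ, f)`. -/
def EOset (μ f : GrpI → ((j : Fin N) → Xs j) → ℝ) :
    Set (GrpI → ((j : Fin N) → Xs j) → ℝ) :=
  {d | IsPolicy d ∧ TP GrpI.w d μ f = TP GrpI.b d μ f}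

/-- The color-blind control: all color-blind decision policies. -/
def CBset : Set (GrpI → ((j : Fin N) → Xs j) → ℝ) :=
  {d | IsPolicy d ∧ ∀ x, d GrpI.w x = d GrpI.b x}

/-- The no proxies control: policies depending on `(i,x)` only through `x_{Ŷ(f)}`. -/
def NoProxies (_μ f : GrpI → ((j : Fin N) → Xs j) → ℝ) :
    Set (GrpI → ((j : Fin N) → Xs j) → ℝ) :=
  {d | IsPolicy d ∧
    ∀ i i' x x', (∀ j ∈ minDep f, x j = x' j) → d i x = d i' x'}

/-- `ℓ²` distance between decision policies. -/
def polDist (d d' : GrpI → ((j : Fin N) → Xs j) → ℝ) : ℝ :=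
  Real.sqrt (∑ i, ∑ x, (d i x - d' i x) ^ 2)

/-- `ℓ²` distance between pairs `(μ, f)`. -/
def pairDist (μ f μ' f' : GrpI → ((j : Fin N) → Xs j) → ℝ) : ℝ :=
  Real.sqrt ((∑ i, ∑ x, (μ i x - μ' i x) ^ 2) + ∑ i, ∑ x, (f i x - f' i x) ^ 2)

/-- `ℓ²` distance between strategy profiles `(c̄, d)`. -/
def profDist (c : GrpI → ℝ) (d : GrpI → ((j : Fin N) → Xs j) → ℝ)
    (c' : GrpI → ℝ) (d' : GrpI → ((j : Fin N) → Xs j) → ℝ) : ℝ :=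
  Real.sqrt ((∑ i, (c i - c' i) ^ 2) + ∑ i, ∑ x, (d i x - d' i x) ^ 2)

end Policies

/-- Upper hemicontinuity of a correspondence on a set. -/
def CorrUpperHemicontinuousOn {α β : Type*} [TopologicalSpace α] [TopologicalSpace β]
    (F : α → Set β) (S : Set α) : Prop :=
  ∀ a ∈ S, ∀ V : Set β, IsOpen V → F a ⊆ V → ∀ᶠ a' in nhdsWithin a S, F a' ⊆ V

/-- Lower hemicontinuity of a correspondence on a set. -/
def CorrLowerHemicontinuousOn {α β : Type*} [TopologicalSpace α] [TopologicalSpace β]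
    (F : α → Set β) (S : Set α) : Prop :=
  ∀ a ∈ S, ∀ V : Set β, IsOpen V → (F a ∩ V).Nonempty →
    ∀ᶠ a' in nhdsWithin a S, (F a' ∩ V).Nonempty

namespace Game

variable {N : ℕ} {Xs : Fin N → Type} [∀ j, Fintype (Xs j)] [∀ j, Nonempty (Xs j)]
variable (Γ : Game N Xs)

/-- Projection `x ↦ x_𝒴`. -/
def proj (x : (j : Fin N) → Xs j) : (j : Γ.Ysub) → Xs j.1 := fun j => x j.1

/-- `p(x | i, y) = p(x_𝒴 | y) · p(x_{-𝒴} | i, x_𝒴)`. -/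
def p (i : GrpI) (x : (j : Fin N) → Xs j) (y : Cls) : ℝ :=
  Γ.pY (Γ.proj x) y * Γ.pC i x

/-- Group probabilities `λ_w`, `λ_b = 1 - λ_w`. -/
def lam : GrpI → ℝ := fun i =>
  match i with
  | GrpI.w => Γ.lamw
  | GrpI.b => 1 - Γ.lamw

/-- The CDF `G` of the cost distribution. -/
def G (c : ℝ) : ℝ := ∫ t in Set.Iic c, Γ.g t

/-- The likelihood function `l(x) = p(x_𝒴 | q) / p(x_𝒴 | u)`. -/
def lhd (x : (j : Fin N) → Xs j) : ℝ :=
  Γ.pY (Γ.proj x) Cls.q / Γ.pY (Γ.proj x) Cls.u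

/-- The likelihood function on `X_𝒴`. -/
def lhdY (xY : (j : Γ.Ysub) → Xs j.1) : ℝ := Γ.pY xY Cls.q / Γ.pY xY Cls.u

/-- The set of likelihood values `{l_1 < … < l_n}`. -/
def LVset : Set ℝ := Set.range Γ.lhd

/-- The assumption that `1` is not a likelihood value
(equivalently, `WW` is single-peaked). -/
def OneNotLV : Prop := (1 : ℝ) ∉ Γ.LVset

/-- The largest likelihood value `l_n`. -/
def lmax : ℝ := sSup Γ.LVset

/-- `⌈ℓ⌉`: the smallest likelihood value `≥ ℓ`. -/
def lceil (ℓ : ℝ) : ℝ := sInf {v | v ∈ Γ.LVset ∧ ℓ ≤ v}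

/-- `⌈ℓ⌉⁻`: the next smallest likelihood value below `⌈ℓ⌉` (or `l_0 = 0`). -/
def lceilm (ℓ : ℝ) : ℝ := sSup (insert 0 {v | v ∈ Γ.LVset ∧ v < Γ.lceil ℓ})

/-- The smallest likelihood value `> ℓ`. -/
def lnext (ℓ : ℝ) : ℝ := sInf {v | v ∈ Γ.LVset ∧ ℓ < v}

/-- The true distribution of features `μ_RE` given cost thresholds `c̄`. -/
def muRE (c : GrpI → ℝ) (i : GrpI) (x : (j : Fin N) → Xs j) : ℝ :=
  Γ.lam i * (Γ.G (c i) * Γ.p i x Cls.q + (1 - Γ.G (c i)) * Γ.p i x Cls.u)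

/-- The true conditional probability (calibrated belief) `f_RE` given `c̄`. -/
def fRE (c : GrpI → ℝ) (i : GrpI) (x : (j : Fin N) → Xs j) : ℝ :=
  Γ.G (c i) * Γ.p i x Cls.q /
    (Γ.G (c i) * Γ.p i x Cls.q + (1 - Γ.G (c i)) * Γ.p i x Cls.u)

/-- Utility `U_i(c̄(i), d(i))` of the representative `i`-applicant. -/
def Uapp (i : GrpI) (ci : ℝ) (di : ((j : Fin N) → Xs j) → ℝ) : ℝ :=
  Γ.om * ∑ x, (Γ.G ci * Γ.p i x Cls.q + (1 - Γ.G ci) * Γ.p i x Cls.u) * di x -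
    ∫ t in Set.Iic ci, t * Γ.g t

/-- Firm utility `U_F(d, μ, f)`. -/
def UF (d μ f : GrpI → ((j : Fin N) → Xs j) → ℝ) : ℝ :=
  ∑ i, ∑ x, d i x * μ i x * (f i x * Γ.vq - (1 - f i x) * Γ.vu)

/-- The color-blind true distribution of features `μ_cb,RE`. -/
def mucbRE (c : GrpI → ℝ) (x : (j : Fin N) → Xs j) : ℝ :=
  Γ.muRE c GrpI.w x + Γ.muRE c GrpI.b x

/-- The color-blind true conditional probability `f_cb,RE`. -/
def fcbRE (c : GrpI → ℝ) (x : (j : Fin N) → Xs j) : ℝ :=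
  (Γ.muRE c GrpI.w x * Γ.fRE c GrpI.w x + Γ.muRE c GrpI.b x * Γ.fRE c GrpI.b x) /
    Γ.mucbRE c x

/-- Firm utility when data is color-blind. -/
def UFcb (dcb μcb fcb : ((j : Fin N) → Xs j) → ℝ) : ℝ :=
  ∑ x, dcb x * μcb x * (fcb x * Γ.vq - (1 - fcb x) * Γ.vu)

/-- `d(i | l_m)`: conditional acceptance probability at likelihood value `lv`. -/
def dcond (i : GrpI) (di : ((j : Fin N) → Xs j) → ℝ) (lv : ℝ) : ℝ :=
  (∑ x ∈ Finset.univ.filter (fun x => Γ.lhd x = lv), Γ.p i x Cls.q * di x) /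
    ∑ x ∈ Finset.univ.filter (fun x => Γ.lhd x = lv), Γ.p i x Cls.q

/-- The within-group policy `d(i)` is associated with the likelihood mixture `ℓ`. -/
def AssociatedWith (i : GrpI) (di : ((j : Fin N) → Xs j) → ℝ) (ℓ : ℝ) : Prop :=
  0 ≤ ℓ ∧ ℓ ≤ Γ.lmax ∧
    ∀ lv ∈ Γ.LVset,
      (Γ.lceil ℓ < lv → Γ.dcond i di lv = 1) ∧
      (lv = Γ.lceil ℓ →
        Γ.dcond i di lv = (Γ.lceil ℓ - ℓ) / (Γ.lceil ℓ - Γ.lceilm ℓ)) ∧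
      (lv < Γ.lceil ℓ → Γ.dcond i di lv = 0)

/-- A decision policy is fair if both within-group policies are associated with
the same likelihood mixture. -/
def Fair (d : GrpI → ((j : Fin N) → Xs j) → ℝ) : Prop :=
  ∃ ℓ, Γ.AssociatedWith GrpI.w (d GrpI.w) ℓ ∧ Γ.AssociatedWith GrpI.b (d GrpI.b) ℓ

/-- `WW(l_m) = ω ∑_{x_𝒴 : l(x_𝒴) > l_m} (p(x_𝒴|q) - p(x_𝒴|u))`. -/
def WWval (t : ℝ) : ℝ :=
  Γ.om * ∑ xY ∈ Finset.univ.filter (fun xY => t < Γ.lhdY xY),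
    (Γ.pY xY Cls.q - Γ.pY xY Cls.u)

/-- The piecewise-linear function `WW` interpolating the points `(l_m, WW(l_m))`. -/
def WW (ℓ : ℝ) : ℝ :=
  if Γ.lceil ℓ = Γ.lceilm ℓ then Γ.WWval (Γ.lceil ℓ)
  else
    (Γ.WWval (Γ.lceilm ℓ) * (Γ.lceil ℓ - ℓ) +
        Γ.WWval (Γ.lceil ℓ) * (ℓ - Γ.lceilm ℓ)) /
      (Γ.lceil ℓ - Γ.lceilm ℓ)

/-- `EĒ(l_m)`: the unique cost with `G(EĒ(l_m)) = 1 / ((v_q/v_u) l_m + 1)`. -/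
def EEbar (lv : ℝ) : ℝ := sInf {cc | 1 / (Γ.vq / Γ.vu * lv + 1) ≤ Γ.G cc}

/-- The correspondence `EE : [0, l_n] ⇒ ℝ`. -/
def EE (ℓ : ℝ) : Set ℝ :=
  if ℓ = 0 then Set.Ici (Γ.EEbar (Γ.lceil 0))
  else if ℓ = Γ.lmax then Set.Iic (Γ.EEbar Γ.lmax)
  else if ℓ ∈ Γ.LVset then Set.Icc (Γ.EEbar (Γ.lnext ℓ)) (Γ.EEbar ℓ)
  else {Γ.EEbar (Γ.lceil ℓ)}

/-- Each representative applicant's cost threshold is a best response to `d`. -/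
def BestResponds (c : GrpI → ℝ) (d : GrpI → ((j : Fin N) → Xs j) → ℝ) : Prop :=
  ∀ (i : GrpI) (c' : ℝ), Γ.Uapp i c' (d i) ≤ Γ.Uapp i (c i) (d i)

/-- An (un-controlled) equilibrium. -/
def IsEquilibrium (c : GrpI → ℝ) (d : GrpI → ((j : Fin N) → Xs j) → ℝ) : Prop :=
  IsPolicy d ∧ Γ.BestResponds c d ∧
    ∀ d', IsPolicy d' →
      Γ.UF d' (Γ.muRE c) (Γ.fRE c) ≤ Γ.UF d (Γ.muRE c) (Γ.fRE c)

/-- A `k`-controlled equilibrium, for the control `(μ, f) ↦ K μ f`. -/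
def IsControlledEq
    (K : (GrpI → ((j : Fin N) → Xs j) → ℝ) → (GrpI → ((j : Fin N) → Xs j) → ℝ) →
      Set (GrpI → ((j : Fin N) → Xs j) → ℝ))
    (c : GrpI → ℝ) (d : GrpI → ((j : Fin N) → Xs j) → ℝ) : Prop :=
  d ∈ K (Γ.muRE c) (Γ.fRE c) ∧ Γ.BestResponds c d ∧
    ∀ d' ∈ K (Γ.muRE c) (Γ.fRE c),
      Γ.UF d' (Γ.muRE c) (Γ.fRE c) ≤ Γ.UF d (Γ.muRE c) (Γ.fRE c)

/-- `𝒮_k(μ, f)`: firm-optimal policies under the control `K` at `(μ, f)`. -/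
def Smax
    (K : (GrpI → ((j : Fin N) → Xs j) → ℝ) → (GrpI → ((j : Fin N) → Xs j) → ℝ) →
      Set (GrpI → ((j : Fin N) → Xs j) → ℝ))
    (μ f : GrpI → ((j : Fin N) → Xs j) → ℝ) :
    Set (GrpI → ((j : Fin N) → Xs j) → ℝ) :=
  {d | d ∈ K μ f ∧ ∀ d' ∈ K μ f, Γ.UF d' μ f ≤ Γ.UF d μ f}

/-- A `k`-controlled `ε`-equilibrium. -/
def IsCtrlEpsEq
    (K : (GrpI → ((j : Fin N) → Xs j) → ℝ) → (GrpI → ((j : Fin N) → Xs j) → ℝ) →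
      Set (GrpI → ((j : Fin N) → Xs j) → ℝ))
    (ε : ℝ) (c : GrpI → ℝ) (d : GrpI → ((j : Fin N) → Xs j) → ℝ) : Prop :=
  ∃ μ f, FullSupp μ ∧ OpenBelief f ∧
    pairDist μ f (Γ.muRE c) (Γ.fRE c) ≤ ε ∧
    Γ.BestResponds c d ∧ d ∈ K μ f ∧ ∀ d' ∈ K μ f, Γ.UF d' μ f ≤ Γ.UF d μ f

/-- Best responses of applicants to a color-blind policy. -/
def BestRespondsCb (c : GrpI → ℝ) (dcb : ((j : Fin N) → Xs j) → ℝ) : Prop :=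
  ∀ (i : GrpI) (c' : ℝ), Γ.Uapp i c' dcb ≤ Γ.Uapp i (c i) dcb

/-- An equilibrium when data is color-blind (unrestricted control). -/
def IsCbEquilibrium (c : GrpI → ℝ) (dcb : ((j : Fin N) → Xs j) → ℝ) : Prop :=
  IsCbPolicy dcb ∧ Γ.BestRespondsCb c dcb ∧
    ∀ dcb', IsCbPolicy dcb' →
      Γ.UFcb dcb' (Γ.mucbRE c) (Γ.fcbRE c) ≤ Γ.UFcb dcb (Γ.mucbRE c) (Γ.fcbRE c)

/-- A `k_cb`-controlled equilibrium when data is color-blind. -/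
def IsCbControlledEq (K : Set (((j : Fin N) → Xs j) → ℝ)) (c : GrpI → ℝ)
    (dcb : ((j : Fin N) → Xs j) → ℝ) : Prop :=
  dcb ∈ K ∧ Γ.BestRespondsCb c dcb ∧
    ∀ dcb' ∈ K,
      Γ.UFcb dcb' (Γ.mucbRE c) (Γ.fcbRE c) ≤ Γ.UFcb dcb (Γ.mucbRE c) (Γ.fcbRE c)

end Game

/-- A control when data is color-blind: for each `X` and each
`(μ_cb, f_cb) ∈ Δ°(X) × (0,1)^X` it specifies a nonempty compact set of
color-blind decision policies. -/
structure CbControl : Type 1 where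
  sets : ∀ (N : ℕ) (Xs : Fin N → Type) [∀ j, Fintype (Xs j)] [∀ j, Nonempty (Xs j)],
    (((j : Fin N) → Xs j) → ℝ) → (((j : Fin N) → Xs j) → ℝ) →
      Set (((j : Fin N) → Xs j) → ℝ)
  nonempty : ∀ (N : ℕ) (Xs : Fin N → Type) [∀ j, Fintype (Xs j)]
    [∀ j, Nonempty (Xs j)] (μ f : ((j : Fin N) → Xs j) → ℝ),
    (∀ x, 0 < μ x) → (∑ x, μ x = 1) → (∀ x, f x ∈ Set.Ioo (0 : ℝ) 1) →
    (sets N Xs μ f).Nonempty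
  compact : ∀ (N : ℕ) (Xs : Fin N → Type) [∀ j, Fintype (Xs j)]
    [∀ j, Nonempty (Xs j)] (μ f : ((j : Fin N) → Xs j) → ℝ),
    (∀ x, 0 < μ x) → (∑ x, μ x = 1) → (∀ x, f x ∈ Set.Ioo (0 : ℝ) 1) →
    IsCompact (sets N Xs μ f)
  mem_policy : ∀ (N : ℕ) (Xs : Fin N → Type) [∀ j, Fintype (Xs j)]
    [∀ j, Nonempty (Xs j)] (μ f : ((j : Fin N) → Xs j) → ℝ),
    (∀ x, 0 < μ x) → (∑ x, μ x = 1) → (∀ x, f x ∈ Set.Ioo (0 : ℝ) 1) →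
    sets N Xs μ f ⊆ {dcb | IsCbPolicy dcb}


/-!
By Berge's maximum theorem, a continuous compact-valued control whose values lie in the compact
cube of policies has an upper hemicontinuous argmax correspondence `𝒮_k` with closed graph.

(1) In an equilibrium each threshold is the applicant's best response
`ω ∑ₓ (p(x|i,q) - p(x|i,u)) d(i,x)`, and the firm's optimal `d` accepts exactly the `x` with
positive net value unless it is indifferent at some `x_𝒴`. Hence equilibrium thresholds lie in a
finite set, and the uniform `ε` is the least of the finitely many radii given by upper
hemicontinuity of `𝒮_k` at the corresponding `(μ_RE, f_RE)`.

(2) Thresholds of `ε`-equilibria lie in `[-ω, ω]`, so a sequence of `εₙ`-equilibria with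
`εₙ → 0` has a convergent subsequence; its limit is a `k`-controlled equilibrium by closedness of
the graph of `𝒮_k`, continuity of `(μ_RE, f_RE)` in the thresholds and continuity of the best
response.
-/

open Filter Topology Set

section Berge

variable {ι α β : Type*} [TopologicalSpace α] [TopologicalSpace β]
  {F : α → Set β} {S : Set α} {a₀ : α} {b₀ : β} {l : Filter ι} {a : ι → α} {b : ι → β}

def corrArgmax (F : α → Set β) (u : β → α → ℝ) (a : α) : Set β :=
  {b | b ∈ F a ∧ ∀ b' ∈ F a, u b' a ≤ u b a}

theorem CorrUpperHemicontinuousOn.mem_of_tendsto [RegularSpace β] [l.NeBot]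
    (hF : CorrUpperHemicontinuousOn F S) (ha₀ : a₀ ∈ S) (hclosed : IsClosed (F a₀))
    (ha : Tendsto a l (𝓝[S] a₀)) (hb : Tendsto b l (𝓝 b₀))
    (hbF : ∀ᶠ n in l, b n ∈ F (a n)) :
    b₀ ∈ F a₀ := by
  by_contra hb₀
  have hbF₀ : Tendsto b l (𝓝ˢ (F a₀)) :=
    (hasBasis_nhdsSet _).tendsto_right_iff.2 fun V ⟨hV, hFV⟩ =>
      ((ha.eventually (hF a₀ ha₀ V hV hFV)).and hbF).mono fun _ h => h.1 h.2
  exact hbF₀.not_tendsto (disjoint_nhdsSet_nhds.2 (by rwa [hclosed.closure_eq])) hb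

theorem CorrLowerHemicontinuousOn.le_of_tendsto [l.NeBot] {u : β → α → ℝ}
    (hu : Continuous (Function.uncurry u)) (hF : CorrLowerHemicontinuousOn F S)
    (ha₀ : a₀ ∈ S) (ha : Tendsto a l (𝓝[S] a₀)) (hb : Tendsto b l (𝓝 b₀))
    (hbmax : ∀ᶠ n in l, ∀ b' ∈ F (a n), u b' (a n) ≤ u (b n) (a n))
    {b' : β} (hb' : b' ∈ F a₀) :
    u b' a₀ ≤ u b₀ a₀ := by
  have ha' : Tendsto a l (𝓝 a₀) := ha.mono_right nhdsWithin_le_nhds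
  have hlim : Tendsto (fun n => u (b n) (a n)) l (𝓝 (u b₀ a₀)) :=
    (hu.tendsto (b₀, a₀)).comp (hb.prodMk_nhds ha')
  refine le_of_forall_sub_le fun η hη => ge_of_tendsto hlim ?_
  have hnear : {p : β × α | u b' a₀ - η < Function.uncurry u p} ∈ 𝓝 (b', a₀) :=
    (isOpen_lt continuous_const hu).mem_nhds (by simpa using hη)
  obtain ⟨U, V, hU, hb'U, hV, ha₀V, hUV⟩ := mem_nhds_prod_iff'.1 hnear
  filter_upwards [ha.eventually (hF a₀ ha₀ U hU ⟨b', hb', hb'U⟩),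
    ha'.eventually (hV.mem_nhds ha₀V), hbmax] with n ⟨z, hzF, hzU⟩ haV hmax
  exact (hUV (Set.mk_mem_prod hzU haV) : u b' a₀ - η < u z (a n)).le.trans (hmax z hzF)

theorem mem_corrArgmax_of_tendsto [RegularSpace β] [l.NeBot] {u : β → α → ℝ}
    (hu : Continuous (Function.uncurry u)) (huhc : CorrUpperHemicontinuousOn F S)
    (hlhc : CorrLowerHemicontinuousOn F S) (ha₀ : a₀ ∈ S) (hclosed : IsClosed (F a₀))
    (ha : Tendsto a l (𝓝[S] a₀)) (hb : Tendsto b l (𝓝 b₀))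
    (hbmax : ∀ᶠ n in l, b n ∈ corrArgmax F u (a n)) :
    b₀ ∈ corrArgmax F u a₀ :=
  ⟨huhc.mem_of_tendsto ha₀ hclosed ha hb (hbmax.mono fun _ h => h.1),
    fun _ hb' => hlhc.le_of_tendsto hu ha₀ ha hb (hbmax.mono fun _ h => h.2) hb'⟩

/-- Berge's maximum theorem, upper half. -/
theorem corrUpperHemicontinuousOn_corrArgmax [FirstCountableTopology α]
    [FirstCountableTopology β] [RegularSpace β] {u : β → α → ℝ}
    (hu : Continuous (Function.uncurry u)) (huhc : CorrUpperHemicontinuousOn F S)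
    (hlhc : CorrLowerHemicontinuousOn F S) (hclosed : ∀ a ∈ S, IsClosed (F a))
    {C : Set β} (hC : IsCompact C) (hFC : ∀ a ∈ S, F a ⊆ C) :
    CorrUpperHemicontinuousOn (corrArgmax F u) S := by
  intro a₀ ha₀ V hV hsub
  by_contra h
  obtain ⟨a, ha, haS⟩ := frequently_iff_seq_forall.1
    ((not_eventually.1 h).and_eventually self_mem_nhdsWithin)
  choose b hbmax hbV using fun n => Set.not_subset.1 (haS n).1
  obtain ⟨b₀, -, φ, hφ, hbφ⟩ := hC.tendsto_subseq fun n => hFC _ (haS n).2 (hbmax n).1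
  have hb₀ : b₀ ∈ corrArgmax F u a₀ :=
    mem_corrArgmax_of_tendsto hu huhc hlhc ha₀ (hclosed a₀ ha₀) (ha.comp hφ.tendsto_atTop)
      hbφ (Eventually.of_forall fun n => hbmax (φ n))
  obtain ⟨n, hn⟩ := (hbφ.eventually (hV.mem_nhds (hsub hb₀))).exists
  exact hbV (φ n) hn

end Berge

theorem eq_ite_of_isMaxOn_sum_mul {ι : Type*} [Fintype ι] [DecidableEq ι] {w d : ι → ℝ}
    (hd : d ∈ univ.pi fun _ => Icc (0 : ℝ) 1)
    (hmax : IsMaxOn (fun d : ι → ℝ => ∑ j, d j * w j) (univ.pi fun _ => Icc 0 1) d)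
    {j : ι} (hw : w j ≠ 0) :
    d j = if 0 < w j then 1 else 0 := by
  have hvary : ∀ v ∈ Icc (0 : ℝ) 1, (v - d j) * w j ≤ 0 := by
    intro v hv
    have hupd : Function.update d j v ∈ univ.pi fun _ => Icc (0 : ℝ) 1 := by
      intro k _
      rcases eq_or_ne k j with rfl | hk
      · simpa using hv
      · simpa [hk] using hd k (mem_univ k)
    have hsum : ∑ k, Function.update d j v k * w k = ∑ k, d k * w k + (v - d j) * w j := by
      rw [← Finset.add_sum_erase _ _ (Finset.mem_univ j),
        ← Finset.add_sum_erase _ _ (Finset.mem_univ j),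
        Finset.sum_congr rfl fun k hk => by rw [Function.update_of_ne (Finset.ne_of_mem_erase hk)]]
      simp only [Function.update_self]
      ring
    have hle : ∑ k, Function.update d j v k * w k ≤ ∑ k, d k * w k := hmax hupd
    linarith
  have hdj := hd j (mem_univ j)
  rcases hw.lt_or_gt with hneg | hpos
  · rw [if_neg hneg.not_gt]
    nlinarith [hvary 0 ⟨le_rfl, zero_le_one⟩, hdj.1]
  · rw [if_pos hpos]
    nlinarith [hvary 1 ⟨zero_le_one, le_rfl⟩, hdj.2]

theorem sq_le_sum_sum_sq {ι κ : Type*} [Fintype ι] [Fintype κ] (g : ι → κ → ℝ) (i : ι) (k : κ) :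
    g i k ^ 2 ≤ ∑ i, ∑ k, g i k ^ 2 :=
  (Finset.single_le_sum (f := fun k => g i k ^ 2) (fun _ _ => sq_nonneg _)
    (Finset.mem_univ k)).trans
    (Finset.single_le_sum (f := fun i => ∑ k, g i k ^ 2) (fun _ _ => by positivity)
      (Finset.mem_univ i))

section PolicySpace

variable {N : ℕ} {Xs : Fin N → Type}

theorem isCompact_setOf_isPolicy :
    IsCompact {d : GrpI → ((j : Fin N) → Xs j) → ℝ | IsPolicy d} := by
  convert isCompact_univ_pi fun _ : GrpI => isCompact_univ_pi fun _ : (j : Fin N) → Xs j =>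
    isCompact_Icc (a := (0 : ℝ)) (b := 1) using 1
  ext d
  simp only [IsPolicy, mem_ofPred_eq, mem_univ_pi]

variable [∀ j, Fintype (Xs j)]

theorem dist_le_pairDist (μ f μ' f' : GrpI → ((j : Fin N) → Xs j) → ℝ) :
    dist (μ, f) (μ', f') ≤ pairDist μ f μ' f' := by
  have hμ := sq_le_sum_sum_sq fun i x => μ i x - μ' i x
  have hf := sq_le_sum_sum_sq fun i x => f i x - f' i x
  have hμ0 : 0 ≤ ∑ i, ∑ x, (μ i x - μ' i x) ^ 2 := by positivity
  have hf0 : 0 ≤ ∑ i, ∑ x, (f i x - f' i x) ^ 2 := by positivity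
  refine max_le ?_ ?_ <;>
    refine (dist_pi_le_iff (Real.sqrt_nonneg _)).2 fun i =>
      (dist_pi_le_iff (Real.sqrt_nonneg _)).2 fun x => ?_ <;>
    rw [Real.dist_eq] <;> refine Real.abs_le_sqrt ?_
  · linarith [hμ i x]
  · linarith [hf i x]

theorem Continuous.polDist {α : Type*} [TopologicalSpace α]
    {d d' : α → GrpI → ((j : Fin N) → Xs j) → ℝ} (hd : Continuous d) (hd' : Continuous d') :
    Continuous fun a => polDist (d a) (d' a) := by
  unfold _root_.polDist
  fun_prop

theorem Continuous.profDist {α : Type*} [TopologicalSpace α] {c c' : α → GrpI → ℝ}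
    {d d' : α → GrpI → ((j : Fin N) → Xs j) → ℝ} (hc : Continuous c) (hd : Continuous d)
    (hc' : Continuous c') (hd' : Continuous d') :
    Continuous fun a => profDist (c a) (d a) (c' a) (d' a) := by
  unfold _root_.profDist
  fun_prop

@[simp]
theorem polDist_self (d : GrpI → ((j : Fin N) → Xs j) → ℝ) : polDist d d = 0 := by
  simp [polDist]

@[simp]
theorem profDist_self (c : GrpI → ℝ) (d : GrpI → ((j : Fin N) → Xs j) → ℝ) :
    profDist c d c d = 0 := by
  simp [profDist]

def beliefDomain :
    Set ((GrpI → ((j : Fin N) → Xs j) → ℝ) × (GrpI → ((j : Fin N) → Xs j) → ℝ)) :=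
  {pf | FullSupp pf.1 ∧ OpenBelief pf.2}

end PolicySpace

namespace Game

variable {N : ℕ} {Xs : Fin N → Type} [∀ j, Fintype (Xs j)] [∀ j, Nonempty (Xs j)]
variable (Γ : Game N Xs)

theorem G_sub_G (a b : ℝ) : Γ.G b - Γ.G a = ∫ t in a..b, Γ.g t :=
  intervalIntegral.integral_Iic_sub_Iic Γ.g_int.integrableOn Γ.g_int.integrableOn

theorem G_strictMono : StrictMono Γ.G := fun a b hab =>
  sub_pos.1 (Γ.G_sub_G a b ▸ intervalIntegral.intervalIntegral_pos_of_pos_on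
    Γ.g_int.intervalIntegrable (fun t _ => Γ.g_pos t) hab)

theorem G_pos (c : ℝ) : 0 < Γ.G c :=
  (setIntegral_nonneg measurableSet_Iic fun t _ => (Γ.g_pos t).le).trans_lt
    (Γ.G_strictMono (sub_one_lt c))

theorem G_lt_one (c : ℝ) : Γ.G c < 1 :=
  (Γ.G_strictMono (lt_add_one c)).trans_le
    (Γ.g_norm ▸ setIntegral_le_integral Γ.g_int (Eventually.of_forall fun t => (Γ.g_pos t).le))

theorem continuous_G : Continuous Γ.G := by
  have h : Γ.G = fun c => Γ.G 0 + ∫ t in (0 : ℝ)..c, Γ.g t := by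
    ext c
    linarith [Γ.G_sub_G 0 c]
  rw [h]
  exact continuous_const.add
    (intervalIntegral.continuous_primitive (fun _ _ => Γ.g_int.intervalIntegrable) 0)

theorem integrable_id_mul_g : Integrable fun t => t * Γ.g t :=
  Γ.g_abs_int.mono' (measurable_id.aestronglyMeasurable.mul Γ.g_int.aestronglyMeasurable)
    (Eventually.of_forall fun t => by
      rw [Real.norm_eq_abs, abs_mul, abs_of_pos (Γ.g_pos t)])

theorem sum_pC_mul_comp_proj (i : GrpI) (h : ((j : Γ.Ysub) → Xs j.1) → ℝ) :
    ∑ x, Γ.pC i x * h (Γ.proj x) = ∑ xY, h xY := by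
  rw [← Finset.sum_fiberwise Finset.univ Γ.proj]
  refine Finset.sum_congr rfl fun xY _ => ?_
  rw [Finset.sum_congr rfl fun x hx => by rw [(Finset.mem_filter.1 hx).2], ← Finset.sum_mul]
  exact (congrArg (· * h xY) (Γ.pC_sum i xY)).trans (one_mul _)

theorem sum_p (i : GrpI) (y : Cls) : ∑ x, Γ.p i x y = 1 := by
  simp_rw [p, mul_comm (Γ.pY _ y)]
  rw [Γ.sum_pC_mul_comp_proj i (Γ.pY · y), Γ.pY_sum]

theorem p_pos (i : GrpI) (x : (j : Fin N) → Xs j) (y : Cls) : 0 < Γ.p i x y :=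
  mul_pos (Γ.pY_pos _ _) (Γ.pC_pos _ _)

theorem lam_pos (i : GrpI) : 0 < Γ.lam i := by
  cases i
  · exact Γ.lamw_pos
  · exact sub_pos.2 Γ.lamw_lt_one

def bestResponse (i : GrpI) (di : ((j : Fin N) → Xs j) → ℝ) : ℝ :=
  Γ.om * ∑ x, (Γ.p i x Cls.q - Γ.p i x Cls.u) * di x

theorem Uapp_sub_Uapp (i : GrpI) (di : ((j : Fin N) → Xs j) → ℝ) (c c' : ℝ) :
    Γ.Uapp i c di - Γ.Uapp i c' di = ∫ t in c'..c, (Γ.bestResponse i di - t) * Γ.g t := by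
  set B := Γ.bestResponse i di
  have hint : ∫ t in c'..c, (B - t) * Γ.g t =
      B * (Γ.G c - Γ.G c') - ((∫ t in Iic c, t * Γ.g t) - ∫ t in Iic c', t * Γ.g t) := by
    rw [Γ.G_sub_G, intervalIntegral.integral_Iic_sub_Iic Γ.integrable_id_mul_g.integrableOn
      Γ.integrable_id_mul_g.integrableOn, ← intervalIntegral.integral_const_mul,
      ← intervalIntegral.integral_sub (Γ.g_int.intervalIntegrable.const_mul B)
        Γ.integrable_id_mul_g.intervalIntegrable]
    exact intervalIntegral.integral_congr fun t _ => by ring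
  have hsum : ∀ γ, ∑ x, (Γ.G γ * Γ.p i x Cls.q + (1 - Γ.G γ) * Γ.p i x Cls.u) * di x =
      ∑ x, Γ.p i x Cls.u * di x + Γ.G γ * ∑ x, (Γ.p i x Cls.q - Γ.p i x Cls.u) * di x := by
    intro γ
    rw [Finset.mul_sum, ← Finset.sum_add_distrib]
    exact Finset.sum_congr rfl fun x _ => by ring
  rw [hint, Uapp, Uapp, hsum, hsum]
  simp only [B, bestResponse]
  ring

theorem Uapp_lt_Uapp_bestResponse (i : GrpI) (di : ((j : Fin N) → Xs j) → ℝ) {c : ℝ}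
    (hc : c ≠ Γ.bestResponse i di) : Γ.Uapp i c di < Γ.Uapp i (Γ.bestResponse i di) di := by
  set B := Γ.bestResponse i di
  have hint : ∀ a b, IntervalIntegrable (fun t => (B - t) * Γ.g t) volume a b := fun a b => by
    refine (((Γ.g_int.const_mul B).sub Γ.integrable_id_mul_g).congr
      (ae_of_all _ fun t => ?_)).intervalIntegrable
    simp only [Pi.sub_apply]
    ring
  rw [← sub_pos, Uapp_sub_Uapp]
  rcases hc.lt_or_gt with h | h
  · exact intervalIntegral.intervalIntegral_pos_of_pos_on (hint _ _)
      (fun t ht => mul_pos (sub_pos.2 ht.2) (Γ.g_pos t)) h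
  · rw [intervalIntegral.integral_symm, ← intervalIntegral.integral_neg]
    exact intervalIntegral.intervalIntegral_pos_of_pos_on (hint _ _).neg
      (fun t ht => neg_pos.2 (mul_neg_of_neg_of_pos (sub_neg.2 ht.1) (Γ.g_pos t))) h

theorem bestResponds_iff (c : GrpI → ℝ) (d : GrpI → ((j : Fin N) → Xs j) → ℝ) :
    Γ.BestResponds c d ↔ ∀ i, c i = Γ.bestResponse i (d i) := by
  refine ⟨fun h i => ?_, fun h i c' => ?_⟩
  · by_contra hne
    exact (h i _).not_gt (Γ.Uapp_lt_Uapp_bestResponse i (d i) hne)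
  · rw [h i]
    rcases eq_or_ne c' (Γ.bestResponse i (d i)) with rfl | hne
    · exact le_rfl
    · exact (Γ.Uapp_lt_Uapp_bestResponse i (d i) hne).le

theorem continuous_bestResponse (i : GrpI) : Continuous (Γ.bestResponse i) := by
  unfold bestResponse
  fun_prop

theorem bestResponse_mem_Icc (i : GrpI) {di : ((j : Fin N) → Xs j) → ℝ}
    (hdi : ∀ x, di x ∈ Icc (0 : ℝ) 1) : Γ.bestResponse i di ∈ Icc (-Γ.om) Γ.om := by
  have hbound : ∀ y, 0 ≤ ∑ x, Γ.p i x y * di x ∧ ∑ x, Γ.p i x y * di x ≤ 1 := fun y =>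
    ⟨Finset.sum_nonneg fun x _ => mul_nonneg (Γ.p_pos i x y).le (hdi x).1,
      (Finset.sum_le_sum fun x _ =>
        mul_le_of_le_one_right (Γ.p_pos i x y).le (hdi x).2).trans (Γ.sum_p i y).le⟩
  have hsplit : Γ.bestResponse i di =
      Γ.om * (∑ x, Γ.p i x Cls.q * di x - ∑ x, Γ.p i x Cls.u * di x) := by
    simp only [bestResponse, sub_mul, Finset.sum_sub_distrib]
  obtain ⟨hq₀, hq₁⟩ := hbound Cls.q
  obtain ⟨hu₀, hu₁⟩ := hbound Cls.u
  rw [hsplit]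
  constructor <;> nlinarith [Γ.om_pos]

theorem G_mul_add_one_sub_G_mul_pos (γ : ℝ) (i : GrpI) (x : (j : Fin N) → Xs j) :
    0 < Γ.G γ * Γ.p i x Cls.q + (1 - Γ.G γ) * Γ.p i x Cls.u :=
  add_pos (mul_pos (Γ.G_pos γ) (Γ.p_pos i x _))
    (mul_pos (sub_pos.2 (Γ.G_lt_one γ)) (Γ.p_pos i x _))

theorem fullSupp_muRE (c : GrpI → ℝ) : FullSupp (Γ.muRE c) := by
  refine ⟨fun i x => mul_pos (Γ.lam_pos i) (Γ.G_mul_add_one_sub_G_mul_pos _ i x), ?_⟩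
  have hgroup : ∀ i, ∑ x, Γ.muRE c i x = Γ.lam i := fun i => by
    simp only [muRE, ← Finset.mul_sum, Finset.sum_add_distrib, Γ.sum_p]
    ring
  simp only [hgroup]
  rw [show (Finset.univ : Finset GrpI) = {GrpI.w, GrpI.b} from rfl, Finset.sum_pair (by decide)]
  simp [lam]

theorem openBelief_fRE (c : GrpI → ℝ) : OpenBelief (Γ.fRE c) := fun i x => by
  have hq := mul_pos (Γ.G_pos (c i)) (Γ.p_pos i x Cls.q)
  have hu := mul_pos (sub_pos.2 (Γ.G_lt_one (c i))) (Γ.p_pos i x Cls.u)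
  exact ⟨div_pos hq (add_pos hq hu), (div_lt_one (add_pos hq hu)).2 (lt_add_of_pos_right _ hu)⟩

theorem continuous_muRE : Continuous Γ.muRE :=
  continuous_pi fun i => continuous_pi fun x => by
    have : Continuous fun c : GrpI → ℝ => Γ.G (c i) := Γ.continuous_G.comp (continuous_apply i)
    unfold muRE
    fun_prop

theorem continuous_fRE : Continuous Γ.fRE :=
  continuous_pi fun i => continuous_pi fun x => by
    have : Continuous fun c : GrpI → ℝ => Γ.G (c i) := Γ.continuous_G.comp (continuous_apply i)
    exact Continuous.div (by fun_prop) (by fun_prop)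
      fun c => (Γ.G_mul_add_one_sub_G_mul_pos (c i) i x).ne'

theorem continuous_UF :
    Continuous (Function.uncurry fun (d : GrpI → ((j : Fin N) → Xs j) → ℝ)
      (μf : (GrpI → ((j : Fin N) → Xs j) → ℝ) × (GrpI → ((j : Fin N) → Xs j) → ℝ)) =>
        Γ.UF d μf.1 μf.2) := by
  unfold Function.uncurry UF
  fun_prop

/-- The firm's payoff from accepting an applicant with features `x`, divided by the positive
factor `λ_i p(x_{-𝒴} | i, x_𝒴)`, when the group threshold is `γ`. -/
def netValue (γ : ℝ) (xY : (j : Γ.Ysub) → Xs j.1) : ℝ :=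
  Γ.G γ * Γ.pY xY Cls.q * Γ.vq - (1 - Γ.G γ) * Γ.pY xY Cls.u * Γ.vu

theorem strictMono_netValue (xY : (j : Γ.Ysub) → Xs j.1) :
    StrictMono fun γ => Γ.netValue γ xY := fun a b hab => by
  have hG := Γ.G_strictMono hab
  have hcoef := add_pos (mul_pos (Γ.pY_pos xY Cls.q) Γ.vq_pos)
    (mul_pos (Γ.pY_pos xY Cls.u) Γ.vu_pos)
  simp only [netValue]
  nlinarith

theorem UF_muRE_fRE (d : GrpI → ((j : Fin N) → Xs j) → ℝ) (c : GrpI → ℝ) :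
    Γ.UF d (Γ.muRE c) (Γ.fRE c) =
      ∑ i, ∑ x, d i x * (Γ.lam i * Γ.pC i x * Γ.netValue (c i) (Γ.proj x)) := by
  refine Finset.sum_congr rfl fun i _ => Finset.sum_congr rfl fun x _ => ?_
  have hD := Γ.G_mul_add_one_sub_G_mul_pos (c i) i x
  have hDf := mul_div_cancel₀ (Γ.G (c i) * Γ.p i x Cls.q) hD.ne'
  simp only [muRE, fRE, netValue]
  simp only [p] at hDf ⊢
  linear_combination (d i x * Γ.lam i * (Γ.vq + Γ.vu)) * hDf

/-- Every equilibrium threshold is either a zero of some `netValue · xY`, or the best response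
to a deterministic policy accepting exactly the `x_𝒴` in some set `s`. -/
def thresholdCands : Set ℝ :=
  {γ | ∃ xY, Γ.netValue γ xY = 0} ∪
    range fun s : Finset ((j : Γ.Ysub) → Xs j.1) =>
      Γ.om * ∑ xY ∈ s, (Γ.pY xY Cls.q - Γ.pY xY Cls.u)

theorem finite_thresholdCands : Γ.thresholdCands.Finite := by
  refine Set.Finite.union ?_ (Set.finite_range _)
  refine (Set.finite_iUnion fun xY =>
    ((Set.subsingleton_singleton (a := (0 : ℝ))).preimage (Γ.strictMono_netValue xY).injective).finite).subset ?_
  rintro γ ⟨xY, h⟩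
  exact mem_iUnion.2 ⟨xY, h⟩

variable {Γ}

theorem IsEquilibrium.apply_eq_ite {c : GrpI → ℝ} {d : GrpI → ((j : Fin N) → Xs j) → ℝ}
    (h : Γ.IsEquilibrium c d) {i : GrpI} {x : (j : Fin N) → Xs j}
    (hx : Γ.netValue (c i) (Γ.proj x) ≠ 0) :
    d i x = if 0 < Γ.netValue (c i) (Γ.proj x) then 1 else 0 := by
  have hpos : 0 < Γ.lam i * Γ.pC i x := mul_pos (Γ.lam_pos i) (Γ.pC_pos i x)
  have hmax : IsMaxOn
      (fun d' : GrpI × ((j : Fin N) → Xs j) → ℝ =>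
        ∑ p, d' p * (Γ.lam p.1 * Γ.pC p.1 p.2 * Γ.netValue (c p.1) (Γ.proj p.2)))
      (univ.pi fun _ => Icc 0 1) (fun p => d p.1 p.2) := fun d' hd' => by
    have := h.2.2 (fun i x => d' (i, x)) fun i x => hd' (i, x) (mem_univ _)
    rw [UF_muRE_fRE, UF_muRE_fRE] at this
    simpa only [mem_ofPred_eq, Fintype.sum_prod_type] using this
  simpa [mul_pos_iff_of_pos_left hpos] using
    eq_ite_of_isMaxOn_sum_mul (fun p _ => h.1 p.1 p.2) hmax (j := (i, x))
      (mul_ne_zero hpos.ne' hx)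

theorem IsEquilibrium.mem_thresholdCands {c : GrpI → ℝ} {d : GrpI → ((j : Fin N) → Xs j) → ℝ}
    (h : Γ.IsEquilibrium c d) (i : GrpI) : c i ∈ Γ.thresholdCands := by
  by_cases hzero : ∃ xY, Γ.netValue (c i) xY = 0
  · exact Or.inl hzero
  push Not at hzero
  refine Or.inr ⟨Finset.univ.filter fun xY => 0 < Γ.netValue (c i) xY, ?_⟩
  refine Eq.trans ?_ ((Γ.bestResponds_iff c d).1 h.2.1 i).symm
  rw [bestResponse]
  dsimp only
  rw [Finset.sum_filter,
    ← Γ.sum_pC_mul_comp_proj i fun xY =>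
      if 0 < Γ.netValue (c i) xY then Γ.pY xY Cls.q - Γ.pY xY Cls.u else 0]
  congr 1
  refine Finset.sum_congr rfl fun x _ => ?_
  rw [h.apply_eq_ite (hzero _), p, p]
  split_ifs <;> ring

variable (Γ)

theorem finite_setOf_isEquilibrium_threshold : {c | ∃ d, Γ.IsEquilibrium c d}.Finite :=
  (Set.Finite.pi fun _ => Γ.finite_thresholdCands).subset fun _ ⟨_, h⟩ =>
    Set.mem_univ_pi.2 h.mem_thresholdCands

variable {K : (GrpI → ((j : Fin N) → Xs j) → ℝ) → (GrpI → ((j : Fin N) → Xs j) → ℝ) →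
    Set (GrpI → ((j : Fin N) → Xs j) → ℝ)}

theorem Smax_eq_corrArgmax (μ f : GrpI → ((j : Fin N) → Xs j) → ℝ) :
    Γ.Smax K μ f = corrArgmax (fun pf : (GrpI → ((j : Fin N) → Xs j) → ℝ) ×
      (GrpI → ((j : Fin N) → Xs j) → ℝ) => K pf.1 pf.2) (fun d pf => Γ.UF d pf.1 pf.2) (μ, f) :=
  rfl

theorem upperHemicontinuousOn_Smax
    (hKcp : ∀ μ f, FullSupp μ → OpenBelief f → IsCompact (K μ f))
    (hKpol : ∀ μ f, FullSupp μ → OpenBelief f → K μ f ⊆ {d | IsPolicy d})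
    (hKuhc : CorrUpperHemicontinuousOn (fun pf => K pf.1 pf.2) beliefDomain)
    (hKlhc : CorrLowerHemicontinuousOn (fun pf => K pf.1 pf.2) beliefDomain) :
    CorrUpperHemicontinuousOn (fun pf => Γ.Smax K pf.1 pf.2) beliefDomain := by
  simp only [Smax_eq_corrArgmax]
  exact corrUpperHemicontinuousOn_corrArgmax Γ.continuous_UF hKuhc hKlhc
    (fun _ hpf => (hKcp _ _ hpf.1 hpf.2).isClosed) isCompact_setOf_isPolicy
    fun _ hpf => hKpol _ _ hpf.1 hpf.2

theorem eventually_forall_exists_Smax_polDist_le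
    (hKcp : ∀ μ f, FullSupp μ → OpenBelief f → IsCompact (K μ f))
    (hKpol : ∀ μ f, FullSupp μ → OpenBelief f → K μ f ⊆ {d | IsPolicy d})
    (hKuhc : CorrUpperHemicontinuousOn (fun pf => K pf.1 pf.2) beliefDomain)
    (hKlhc : CorrLowerHemicontinuousOn (fun pf => K pf.1 pf.2) beliefDomain)
    {μ₀ f₀ : GrpI → ((j : Fin N) → Xs j) → ℝ} (hμ₀ : FullSupp μ₀) (hf₀ : OpenBelief f₀)
    {δ : ℝ} (hδ : 0 < δ) :
    ∀ᶠ ε in 𝓝 0, ∀ μ f, FullSupp μ → OpenBelief f → pairDist μ f μ₀ f₀ ≤ ε →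
      ∀ dh ∈ Γ.Smax K μ f, ∃ d' ∈ Γ.Smax K μ₀ f₀, polDist dh d' ≤ δ := by
  have hV : IsOpen (⋃ d' ∈ Γ.Smax K μ₀ f₀, {d | polDist d d' < δ}) := isOpen_biUnion fun d' _ =>
    isOpen_lt (continuous_id.polDist continuous_const) continuous_const
  have hSV : Γ.Smax K μ₀ f₀ ⊆ ⋃ d' ∈ Γ.Smax K μ₀ f₀, {d | polDist d d' < δ} :=
    fun d hd => mem_biUnion hd (by simpa using hδ)
  obtain ⟨r, hr, hball⟩ := Metric.eventually_nhds_iff.1 <| eventually_nhdsWithin_iff.1 <|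
    Γ.upperHemicontinuousOn_Smax hKcp hKpol hKuhc hKlhc (μ₀, f₀) ⟨hμ₀, hf₀⟩ _ hV hSV
  filter_upwards [eventually_lt_nhds hr] with ε hε μ f hμ hf hdist dh hdh
  obtain ⟨d', hd', hlt⟩ := mem_iUnion₂.1 <|
    hball ((dist_le_pairDist _ _ _ _).trans_lt (hdist.trans_lt hε)) ⟨hμ, hf⟩ hdh
  exact ⟨d', hd', le_of_lt hlt⟩

theorem isControlledEq_of_tendsto
    (hKcp : ∀ μ f, FullSupp μ → OpenBelief f → IsCompact (K μ f))
    (hKuhc : CorrUpperHemicontinuousOn (fun pf => K pf.1 pf.2) beliefDomain)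
    (hKlhc : CorrLowerHemicontinuousOn (fun pf => K pf.1 pf.2) beliefDomain)
    {ε : ℕ → ℝ} {c : ℕ → GrpI → ℝ} {d : ℕ → GrpI → ((j : Fin N) → Xs j) → ℝ}
    {c₀ : GrpI → ℝ} {d₀ : GrpI → ((j : Fin N) → Xs j) → ℝ}
    (hε : Tendsto ε atTop (𝓝 0)) (hcd : ∀ n, Γ.IsCtrlEpsEq K (ε n) (c n) (d n))
    (hc : Tendsto c atTop (𝓝 c₀)) (hd : Tendsto d atTop (𝓝 d₀)) :
    Γ.IsControlledEq K c₀ d₀ := by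
  choose μ f hμ hf hdist hbr hdK hdmax using hcd
  have hRE : Tendsto (fun n => (Γ.muRE (c n), Γ.fRE (c n))) atTop
      (𝓝 (Γ.muRE c₀, Γ.fRE c₀)) :=
    ((Γ.continuous_muRE.prodMk Γ.continuous_fRE).tendsto c₀).comp hc
  have hμf : Tendsto (fun n => (μ n, f n)) atTop
      (𝓝[beliefDomain] (Γ.muRE c₀, Γ.fRE c₀)) :=
    tendsto_nhdsWithin_iff.2 ⟨hRE.congr_dist <| squeeze_zero (fun _ => dist_nonneg)
      (fun n => (dist_comm (μ n, f n) _ ▸ dist_le_pairDist _ _ _ _).trans (hdist n)) hε,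
      Eventually.of_forall fun n => ⟨hμ n, hf n⟩⟩
  have hd₀ : d₀ ∈ Γ.Smax K (Γ.muRE c₀) (Γ.fRE c₀) :=
    Γ.Smax_eq_corrArgmax _ _ ▸ mem_corrArgmax_of_tendsto Γ.continuous_UF hKuhc hKlhc
      ⟨Γ.fullSupp_muRE c₀, Γ.openBelief_fRE c₀⟩
      (hKcp _ _ (Γ.fullSupp_muRE c₀) (Γ.openBelief_fRE c₀)).isClosed hμf hd
      (Eventually.of_forall fun n => Γ.Smax_eq_corrArgmax _ _ ▸ ⟨hdK n, hdmax n⟩)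
  have hbr₀ : ∀ i, c₀ i = Γ.bestResponse i (d₀ i) := fun i =>
    tendsto_nhds_unique (((continuous_apply i).tendsto c₀).comp hc) <| by
      simpa only [Function.comp_def, ← (Γ.bestResponds_iff _ _).1 (hbr _) i] using
        ((Γ.continuous_bestResponse i).tendsto (d₀ i)).comp
          (((continuous_apply i).tendsto d₀).comp hd)
  exact ⟨hd₀.1, (Γ.bestResponds_iff c₀ d₀).2 hbr₀, hd₀.2⟩

theorem eventually_forall_isCtrlEpsEq_exists_profDist_le
    (hKcp : ∀ μ f, FullSupp μ → OpenBelief f → IsCompact (K μ f))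
    (hKpol : ∀ μ f, FullSupp μ → OpenBelief f → K μ f ⊆ {d | IsPolicy d})
    (hKuhc : CorrUpperHemicontinuousOn (fun pf => K pf.1 pf.2) beliefDomain)
    (hKlhc : CorrLowerHemicontinuousOn (fun pf => K pf.1 pf.2) beliefDomain)
    {δ : ℝ} (hδ : 0 < δ) :
    ∀ᶠ ε in 𝓝[>] 0, ∀ c d, Γ.IsCtrlEpsEq K ε c d →
      ∃ c' d', Γ.IsControlledEq K c' d' ∧ profDist c d c' d' ≤ δ := by
  by_contra h
  obtain ⟨ε, hε, hfar⟩ := frequently_iff_seq_forall.1 (not_eventually.1 h)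
  push Not at hfar
  choose c d hcd hfar using hfar
  have hbounded : ∀ n, (c n, d n) ∈ (univ.pi fun _ => Icc (-Γ.om) Γ.om) ×ˢ {d | IsPolicy d} := by
    intro n
    obtain ⟨μ, f, hμ, hf, -, hbr, hdK, -⟩ := hcd n
    have hpol := hKpol μ f hμ hf hdK
    refine ⟨fun i _ => ?_, hpol⟩
    dsimp only
    rw [(Γ.bestResponds_iff _ _).1 hbr i]
    exact Γ.bestResponse_mem_Icc i (hpol i)
  obtain ⟨⟨c₀, d₀⟩, -, φ, hφ, hlim⟩ :=
    ((isCompact_univ_pi fun _ => isCompact_Icc).prod isCompact_setOf_isPolicy).tendsto_subseq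
      hbounded
  have heq : Γ.IsControlledEq K c₀ d₀ :=
    Γ.isControlledEq_of_tendsto hKcp hKuhc hKlhc
      ((tendsto_nhds_of_tendsto_nhdsWithin hε).comp hφ.tendsto_atTop) (fun n => hcd (φ n))
      ((continuous_fst.tendsto _).comp hlim) ((continuous_snd.tendsto _).comp hlim)
  have hdist : Tendsto (fun n => profDist (c (φ n)) (d (φ n)) c₀ d₀) atTop (𝓝 0) := by
    simpa [Function.comp_def] using ((continuous_fst.profDist continuous_snd
      (continuous_const (y := c₀)) (continuous_const (y := d₀))).tendsto (c₀, d₀)).comp hlim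
  obtain ⟨n, hn⟩ := (hdist.eventually (gt_mem_nhds hδ)).exists
  exact (hfar (φ n) c₀ d₀ heq).not_gt hn

end Game

theorem continuous_control_not_fragile_general
    {N : ℕ} {Xs : Fin N → Type} [∀ j, Fintype (Xs j)] [∀ j, Nonempty (Xs j)]
    (K : (GrpI → ((j : Fin N) → Xs j) → ℝ) → (GrpI → ((j : Fin N) → Xs j) → ℝ) →
      Set (GrpI → ((j : Fin N) → Xs j) → ℝ))
    (hKcp : ∀ μ f, FullSupp μ → OpenBelief f → IsCompact (K μ f))
    (hKpol : ∀ μ f, FullSupp μ → OpenBelief f → K μ f ⊆ {d | IsPolicy d})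
    (hKuhc : CorrUpperHemicontinuousOn (fun pf => K pf.1 pf.2)
      {pf : (GrpI → ((j : Fin N) → Xs j) → ℝ) × (GrpI → ((j : Fin N) → Xs j) → ℝ) |
        FullSupp pf.1 ∧ OpenBelief pf.2})
    (hKlhc : CorrLowerHemicontinuousOn (fun pf => K pf.1 pf.2)
      {pf : (GrpI → ((j : Fin N) → Xs j) → ℝ) × (GrpI → ((j : Fin N) → Xs j) → ℝ) |
        FullSupp pf.1 ∧ OpenBelief pf.2})
    (Γ : Game N Xs) (δ : ℝ) (hδ : 0 < δ) :
    ∃ ε : ℝ, 0 < ε ∧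
      (∀ c d, Γ.IsEquilibrium c d → c GrpI.w ≠ c GrpI.b →
        ∀ μ f, FullSupp μ → OpenBelief f →
          pairDist μ f (Γ.muRE c) (Γ.fRE c) ≤ ε →
          ∀ dh ∈ Γ.Smax K μ f,
            ∃ d' ∈ Γ.Smax K (Γ.muRE c) (Γ.fRE c), polDist dh d' ≤ δ) ∧
      (∀ c d, Γ.IsCtrlEpsEq K ε c d →
        ∃ c' d', Γ.IsControlledEq K c' d' ∧ profDist c d c' d' ≤ δ) := by
  have hequilibria := (Γ.finite_setOf_isEquilibrium_threshold.eventually_all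
    (l := 𝓝[>] (0 : ℝ))).2 fun c _ => nhdsWithin_le_nhds <|
      Γ.eventually_forall_exists_Smax_polDist_le hKcp hKpol hKuhc hKlhc
        (Γ.fullSupp_muRE c) (Γ.openBelief_fRE c) hδ
  have hepsEq := Γ.eventually_forall_isCtrlEpsEq_exists_profDist_le hKcp hKpol hKuhc hKlhc hδ
  obtain ⟨ε, ⟨h₁, h₂⟩, hε⟩ := ((hequilibria.and hepsEq).and self_mem_nhdsWithin).exists
  exact ⟨ε, hε, fun c d hcd _ => h₁ c ⟨d, hcd⟩, h₂⟩

/-- **Theorem 3.** Any continuous control is not fragile: if for the given `X`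
the correspondence `(μ, f) ↦ k(X, μ, f)` on `Δ°(I×X) × (0,1)^{I×X}` is
nonempty- and compact-valued, upper hemicontinuous, and lower hemicontinuous,
then for every game on `X` and every `δ > 0` there exists `ε > 0` such that
(1) near any discriminatory equilibrium, firm-optimal policies under `k` at any
`(μ*, f*)` within `ε` of `(μ*_RE, f*_RE)` are within `δ` of firm-optimal
policies at `(μ*_RE, f*_RE)`, and (2) every `k`-controlled `ε`-equilibrium is
within `δ` of some `k`-controlled equilibrium. -/
theorem continuous_control_not_fragile
    {N : ℕ} {Xs : Fin N → Type} [∀ j, Fintype (Xs j)] [∀ j, Nonempty (Xs j)]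
    (K : (GrpI → ((j : Fin N) → Xs j) → ℝ) → (GrpI → ((j : Fin N) → Xs j) → ℝ) →
      Set (GrpI → ((j : Fin N) → Xs j) → ℝ))
    (hKne : ∀ μ f, FullSupp μ → OpenBelief f → (K μ f).Nonempty)
    (hKcp : ∀ μ f, FullSupp μ → OpenBelief f → IsCompact (K μ f))
    (hKpol : ∀ μ f, FullSupp μ → OpenBelief f → K μ f ⊆ {d | IsPolicy d})
    (hKuhc : CorrUpperHemicontinuousOn (fun pf => K pf.1 pf.2)
      {pf : (GrpI → ((j : Fin N) → Xs j) → ℝ) × (GrpI → ((j : Fin N) → Xs j) → ℝ) |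
        FullSupp pf.1 ∧ OpenBelief pf.2})
    (hKlhc : CorrLowerHemicontinuousOn (fun pf => K pf.1 pf.2)
      {pf : (GrpI → ((j : Fin N) → Xs j) → ℝ) × (GrpI → ((j : Fin N) → Xs j) → ℝ) |
        FullSupp pf.1 ∧ OpenBelief pf.2})
    (Γ : Game N Xs) (hone : Γ.OneNotLV) (δ : ℝ) (hδ : 0 < δ) :
    ∃ ε : ℝ, 0 < ε ∧
      (∀ c d, Γ.IsEquilibrium c d → c GrpI.w ≠ c GrpI.b →
        ∀ μ f, FullSupp μ → OpenBelief f →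
          pairDist μ f (Γ.muRE c) (Γ.fRE c) ≤ ε →
          ∀ dh ∈ Γ.Smax K μ f,
            ∃ d' ∈ Γ.Smax K (Γ.muRE c) (Γ.fRE c), polDist dh d' ≤ δ) ∧
      (∀ c d, Γ.IsCtrlEpsEq K ε c d →
        ∃ c' d', Γ.IsControlledEq K c' d' ∧ profDist c d c' d' ≤ δ) :=
  continuous_control_not_fragile_general K hKcp hKpol hKuhc hKlhc Γ δ hδ
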